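/- Let I ⊆ R = K[x_0,...,x_n] be a saturated stable monomial ideal with minimal monomial generators x^{A_1},...,x^{A_r}; set l_i = max{ j : x_j divides x^{A_i} } and d_i = deg x^{A_i}. Then the Hilbert polynomial of R/I equals C(z+n, n) − Σ_{i=1}^r C(z+n−d_i−l_i, n−l_i). -/

import Mathlib

open MvPolynomial
open Fin.NatCast

noncomputable section

/-- The polynomial ring `K[x_0,…,x_n]` in `n+1` variables. -/
abbrev PR (K : Type*) [Field K] (n : ℕ) := MvPolynomial (Fin (n+1)) K

variable {K : Type*} [Field K] {n : ℕ}

/-- The monomial `x^A`. -/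
def mon (A : Fin (n+1) →₀ ℕ) : PR K n := monomial A 1

/-- Total degree of the monomial with exponent vector `A`. -/
def mdeg (A : Fin (n+1) →₀ ℕ) : ℕ := ∑ i, A i

/-- The largest index of a variable dividing `x^A` (0 if `A = 0`). -/
def maxIdx (A : Fin (n+1) →₀ ℕ) : Fin (n+1) := (A.support.max).unbotD 0

/-- The exponent vector of `(x_i / x_j) · x^A`. -/
def shiftM (A : Fin (n+1) →₀ ℕ) (i j : Fin (n+1)) : Fin (n+1) →₀ ℕ :=
  A + Finsupp.single i 1 - Finsupp.single j 1

/-- `I` is a monomial ideal: generated by a set of monomials. -/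
def IsMonomialIdeal (I : Ideal (PR K n)) : Prop :=
  ∃ S : Set (Fin (n+1) →₀ ℕ), I = Ideal.span ((fun A => (mon A : PR K n)) '' S)

/-- Strongly stable monomial ideal. -/
def StronglyStable (I : Ideal (PR K n)) : Prop :=
  ∀ A : Fin (n+1) →₀ ℕ, mon A ∈ I → ∀ i j : Fin (n+1), A j ≠ 0 → i < j →
    mon (shiftM A i j) ∈ I

/-- Stable monomial ideal. -/
def Stable (I : Ideal (PR K n)) : Prop :=
  ∀ A : Fin (n+1) →₀ ℕ, A ≠ 0 → mon A ∈ I → ∀ i : Fin (n+1), i < maxIdx A →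
    mon (shiftM A i (maxIdx A)) ∈ I

/-- `x^A` is a minimal monomial generator of `I`. -/
def MinGen (I : Ideal (PR K n)) (A : Fin (n+1) →₀ ℕ) : Prop :=
  mon A ∈ I ∧ ∀ B : Fin (n+1) →₀ ℕ, B ≤ A → B ≠ A → mon B ∉ I

/-- The set of exponent vectors of minimal monomial generators of `I`. -/
def Gens (I : Ideal (PR K n)) : Set (Fin (n+1) →₀ ℕ) := {A | MinGen I A}

/-- The irrelevant maximal ideal `(x_0,…,x_n)`. -/
def irrIdeal (K : Type*) [Field K] (n : ℕ) : Ideal (PR K n) :=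
  Ideal.span (Set.range fun i : Fin (n+1) => (X i : PR K n))

/-- `I` is saturated: `(I : (x_0,…,x_n)) = I`. -/
def Saturated (I : Ideal (PR K n)) : Prop :=
  Submodule.colon I (irrIdeal K n) = I

/-- The saturation `∪ₖ (I : (x_0,…,x_n)^k)`. -/
def saturationOf (I : Ideal (PR K n)) : Ideal (PR K n) :=
  ⨆ k : ℕ, Submodule.colon I (((irrIdeal K n) ^ k : Ideal (PR K n)) : Set (PR K n))

/-- The Hilbert function of `R/I`: `j ↦ dim_K [R/I]_j`. -/
def hilbF {σ : Type*} (I : Ideal (MvPolynomial σ K)) (j : ℕ) : ℕ :=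
  Module.finrank K
    ((homogeneousSubmodule σ K j).map (Ideal.Quotient.mkₐ K I).toLinearMap)

/-- `p` is the Hilbert polynomial of `R/I`. -/
def IsHilbPoly {σ : Type*} (I : Ideal (MvPolynomial σ K)) (p : Polynomial ℚ) : Prop :=
  ∃ N : ℕ, ∀ j : ℕ, N ≤ j → p.eval (j : ℚ) = (hilbF I j : ℚ)

/-- The binomial-coefficient polynomial `C(q, k) = q(q-1)⋯(q-k+1)/k!`. -/
def choosePoly (q : Polynomial ℚ) (k : ℕ) : Polynomial ℚ :=
  ((k.factorial : ℚ))⁻¹ • ∏ j ∈ Finset.range k, (q - Polynomial.C (j : ℚ))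

/-- The canonical representation `p(z) = Σ_{i=0}^d [C(z+i,i+1) − C(z+i−b_i,i+1)]`. -/
def canonicalHP (d : ℕ) (b : ℕ → ℕ) : Polynomial ℚ :=
  ∑ i ∈ Finset.range (d+1),
    (choosePoly (Polynomial.X + Polynomial.C (i : ℚ)) (i+1)
      - choosePoly (Polynomial.X + Polynomial.C (i : ℚ) - Polynomial.C (b i : ℚ)) (i+1))

/-- `x^A >_lex x^B`. -/
def LexGt (A B : Fin (n+1) →₀ ℕ) : Prop :=
  ∃ i : Fin (n+1), (∀ j : Fin (n+1), j < i → A j = B j) ∧ B i < A i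

/-- `I` is a lexsegment ideal. -/
def IsLexsegment (I : Ideal (PR K n)) : Prop :=
  IsMonomialIdeal I ∧ ∀ A B : Fin (n+1) →₀ ℕ, mdeg A = mdeg B → mon B ∈ I →
    LexGt A B → mon A ∈ I

/-- `I` is a homogeneous ideal. -/
def Homog (I : Ideal (PR K n)) : Prop :=
  ∀ f ∈ I, ∀ j : ℕ, homogeneousComponent j f ∈ I

/-- The set of right-shifts of `x^A`. -/
def rightShifts (A : Fin (n+1) →₀ ℕ) : Set (Fin (n+1) →₀ ℕ) :=
  {B | ∃ i : Fin (n+1), (i : ℕ) + 2 ≤ n ∧ A i ≠ 0 ∧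
    B = shiftM A ((((i : ℕ) + 1 : ℕ)) : Fin (n+1)) i}

/-- The set of left-shifts of `x^A`. -/
def leftShifts (A : Fin (n+1) →₀ ℕ) : Set (Fin (n+1) →₀ ℕ) :=
  {B | ∃ i : Fin (n+1), 1 ≤ (i : ℕ) ∧ (i : ℕ) + 1 ≤ n ∧ A i ≠ 0 ∧
    B = shiftM A ((((i : ℕ) - 1 : ℕ)) : Fin (n+1)) i}

/-- The monomials `x^A x_r, …, x^A x_{n-1}` with `r = max(x^A)`. -/
def expSet (A : Fin (n+1) →₀ ℕ) : Set (Fin (n+1) →₀ ℕ) :=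
  {B | ∃ j : Fin (n+1), ((maxIdx A : ℕ)) ≤ (j : ℕ) ∧ (j : ℕ) + 1 ≤ n ∧
    B = A + Finsupp.single j 1}

/-- `x^A ≠ 1` is expandable in `I`. -/
def Expandable (I : Ideal (PR K n)) (A : Fin (n+1) →₀ ℕ) : Prop :=
  A ≠ 0 ∧ MinGen I A ∧ ∀ B ∈ rightShifts A, ¬ MinGen I B

/-- `x^A ≠ 1` is contractible in `I`. -/
def Contractible (I : Ideal (PR K n)) (A : Fin (n+1) →₀ ℕ) : Prop :=
  A ≠ 0 ∧ mon A ∉ I ∧ MinGen I (A + Finsupp.single (((n - 1 : ℕ)) : Fin (n+1)) 1) ∧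
    ∀ B ∈ leftShifts A, mon B ∈ I

/-- The expansion of `x^A` in `I`. -/
def expansionIdeal (I : Ideal (PR K n)) (A : Fin (n+1) →₀ ℕ) : Ideal (PR K n) :=
  Ideal.span ((fun B => (mon B : PR K n)) '' ((Gens I \ {A}) ∪ expSet A))

/-- The contraction of `x^A` in `I`. -/
def contractionIdeal (I : Ideal (PR K n)) (A : Fin (n+1) →₀ ℕ) : Ideal (PR K n) :=
  Ideal.span ((fun B => (mon B : PR K n)) '' ((Gens I ∪ {A}) \ expSet A))

/-- Setting `x_{n-1} = x_n = 1` in the exponent vector `A`. -/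
def stripLastTwo (A : Fin (n+1) →₀ ℕ) : Fin (n+1) →₀ ℕ :=
  Finsupp.update (Finsupp.update A (((n : ℕ)) : Fin (n+1)) 0) (((n - 1 : ℕ)) : Fin (n+1)) 0

/-- The double saturation `sat_{x_{n-1},x_n}(I)` (as an ideal of `R`). -/
def doubleSat (I : Ideal (PR K n)) : Ideal (PR K n) :=
  Ideal.span ((fun A => (mon (stripLastTwo A) : PR K n)) '' Gens I)

/-- Restriction of an exponent vector to the first `n` variables. -/
def restrictExp (A : Fin (n+1) →₀ ℕ) : Fin n →₀ ℕ :=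
  Finsupp.comapDomain Fin.castSucc A (Fin.castSucc_injective n).injOn

/-- The ideal `I · R^{(1)}` in `K[x_0,…,x_{n-1}]` (for saturated monomial `I`). -/
def restrictIdeal (I : Ideal (PR K n)) : Ideal (MvPolynomial (Fin n) K) :=
  Ideal.span ((fun A => (monomial (restrictExp A) (1 : K) : MvPolynomial (Fin n) K)) '' Gens I)

/-- Lex order on exponent vectors in `n` variables. -/
def LexGt' (A B : Fin n →₀ ℕ) : Prop :=
  ∃ i : Fin n, (∀ j : Fin n, j < i → A j = B j) ∧ B i < A i

/-- Monomial ideal in `K[x_0,…,x_{n-1}]`. -/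
def IsMonomialIdeal' (I : Ideal (MvPolynomial (Fin n) K)) : Prop :=
  ∃ S : Set (Fin n →₀ ℕ),
    I = Ideal.span ((fun A => (monomial A (1 : K) : MvPolynomial (Fin n) K)) '' S)

/-- Lexsegment ideal in `K[x_0,…,x_{n-1}]`. -/
def IsLexsegment' (I : Ideal (MvPolynomial (Fin n) K)) : Prop :=
  IsMonomialIdeal' I ∧ ∀ A B : Fin n →₀ ℕ, (∑ i, A i) = (∑ i, B i) →
    monomial B (1 : K) ∈ I → LexGt' A B → monomial A (1 : K) ∈ I

/-- `I` is almost lexsegment: saturated strongly stable with `I·R^{(1)}` lexsegment. -/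
def AlmostLex (I : Ideal (PR K n)) : Prop :=
  IsMonomialIdeal I ∧ StronglyStable I ∧ Saturated I ∧ IsLexsegment' (restrictIdeal I)

/-- A graded free resolution of the ideal `I`, with `rank i` the rank of the `i`-th
free module and `twist i k` the degrees of the standard basis elements. -/
structure GradedFreeRes (I : Ideal (PR K n)) where
  rank : ℕ → ℕ
  twist : (i : ℕ) → Fin (rank i) → ℕ
  diff : (i : ℕ) → ((Fin (rank (i+1)) → PR K n) →ₗ[PR K n] (Fin (rank i) → PR K n))
  aug : (Fin (rank 0) → PR K n) →ₗ[PR K n] PR K n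
  aug_range : LinearMap.range aug = I
  aug_graded : ∀ k, aug (Pi.single k 1) ∈ homogeneousSubmodule (Fin (n+1)) K (twist 0 k)
  diff_graded : ∀ i k l, diff i (Pi.single k 1) l = 0 ∨
    (twist i l ≤ twist (i+1) k ∧
      diff i (Pi.single k 1) l ∈ homogeneousSubmodule (Fin (n+1)) K (twist (i+1) k - twist i l))
  exact_aug : LinearMap.range (diff 0) = LinearMap.ker aug
  exact_diff : ∀ i, LinearMap.range (diff (i+1)) = LinearMap.ker (diff i)

/-- A resolution is minimal if all differential entries lie in the irrelevant ideal. -/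
def MinimalRes {I : Ideal (PR K n)} (F : GradedFreeRes I) : Prop :=
  ∀ i k l, constantCoeff (F.diff i (Pi.single k 1) l) = 0

end

/-!
For a stable ideal every monomial `x^B ∈ I` factors uniquely as `x^B = x^{A_i} · x^u` with
`max(x^{A_i}) ≤ min(x^u)` (Eliahou–Kervaire): `x^{A_i}` is the shortest initial segment of `x^B`
lying in `I`, which stability forces to be a minimal generator, and two initial segments of `x^B`
are comparable, so two minimal generators among them coincide. Hence in degree `j ≥ d_i + l_i` the
monomials of `I` number `Σ_i C(j - d_i + n - l_i, n - l_i)`, the `i`-th term counting the monomials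
of degree `j - d_i` in `x_{l_i}, …, x_n`, while the monomials outside `I` form a basis of
`(R/I)_j` and number `C(j + n, n)` minus that sum.
-/

open Finset

section Monomials

variable {K : Type*} [Field K] {n : ℕ}

lemma mon_mul_mon (a b : Fin (n+1) →₀ ℕ) : (mon a : PR K n) * mon b = mon (a + b) := by
  simp [mon, monomial_mul]

lemma mon_mem_of_le {I : Ideal (PR K n)} {a b : Fin (n+1) →₀ ℕ} (ha : mon a ∈ I)
    (hab : a ≤ b) : mon b ∈ I := by
  rw [← tsub_add_cancel_of_le hab, ← mon_mul_mon]
  exact I.mul_mem_left _ ha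

lemma isMonomialIdeal_span_range {r : ℕ} (A : Fin r → Fin (n+1) →₀ ℕ) :
    IsMonomialIdeal (Ideal.span (Set.range fun i => (mon (A i) : PR K n))) :=
  ⟨Set.range A, by rw [← Set.range_comp]; rfl⟩

lemma mon_mem_span_range_iff {r : ℕ} (A : Fin r → Fin (n+1) →₀ ℕ) (B : Fin (n+1) →₀ ℕ) :
    (mon B : PR K n) ∈ Ideal.span (Set.range fun i => (mon (A i) : PR K n)) ↔
      ∃ i, A i ≤ B := by
  rw [show (Set.range fun i => (mon (A i) : PR K n)) = (fun s => monomial s 1) '' Set.range A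
    from Set.range_comp (fun s => monomial s 1) A, mem_ideal_span_monomial_image]
  simp [mon]

lemma IsMonomialIdeal.mem_iff {I : Ideal (PR K n)} (hI : IsMonomialIdeal I) (f : PR K n) :
    f ∈ I ↔ ∀ B ∈ f.support, (mon B : PR K n) ∈ I := by
  obtain ⟨S, rfl⟩ := hI
  simp [mon, mem_ideal_span_monomial_image]

lemma MinGen.eq_of_le {I : Ideal (PR K n)} {g h : Fin (n+1) →₀ ℕ} (hg : MinGen I g)
    (hh : MinGen I h) (hle : g ≤ h) : g = h :=
  by_contra fun hne => hh.2 g hle hne hg.1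

end Monomials

section MaxIdx

variable {n : ℕ} {g B : Fin (n+1) →₀ ℕ}

lemma maxIdx_eq_of_max_eq {m : Fin (n+1)} (h : B.support.max = m) : maxIdx B = m := by
  rw [maxIdx, h]; rfl

lemma le_maxIdx {t : Fin (n+1)} (h : B t ≠ 0) : t ≤ maxIdx B := by
  obtain ⟨m, hm⟩ := Finset.max_of_mem (Finsupp.mem_support_iff.2 h)
  rw [maxIdx_eq_of_max_eq hm]
  exact Finset.le_max_of_eq (Finsupp.mem_support_iff.2 h) hm

lemma apply_eq_zero_of_maxIdx_lt {t : Fin (n+1)} (h : maxIdx B < t) : B t = 0 := by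
  by_contra hB
  exact (le_maxIdx hB).not_gt h

lemma apply_maxIdx_ne_zero (hB : B ≠ 0) : B (maxIdx B) ≠ 0 := by
  obtain ⟨m, hm⟩ := Finset.max_of_nonempty (Finsupp.support_nonempty_iff.2 hB)
  rw [maxIdx_eq_of_max_eq hm]
  exact Finsupp.mem_support_iff.1 (Finset.mem_of_max hm)

lemma maxIdx_mono (h : g ≤ B) : maxIdx g ≤ maxIdx B := by
  obtain rfl | hg := eq_or_ne g 0
  · simp [maxIdx]
  · exact le_maxIdx ((Nat.pos_of_ne_zero (apply_maxIdx_ne_zero hg)).trans_le (h _)).ne'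

end MaxIdx

section InitialSegment

variable {n : ℕ} {g h B : Fin (n+1) →₀ ℕ}

/-- `x^g` is an initial segment of `x^B` when `x^B = x^g · x^u` with `max(x^g) ≤ min(x^u)`. -/
def IsInitialSegment (g B : Fin (n+1) →₀ ℕ) : Prop :=
  g ≤ B ∧ ∀ t < maxIdx g, g t = B t

lemma isInitialSegment_refl (B : Fin (n+1) →₀ ℕ) : IsInitialSegment B B :=
  ⟨le_rfl, fun _ _ => rfl⟩

lemma isInitialSegment_add {u : Fin (n+1) →₀ ℕ} (hu : ∀ t ∈ u.support, maxIdx g ≤ t) :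
    IsInitialSegment g (g + u) := by
  refine ⟨le_self_add, fun t ht => ?_⟩
  have hut : u t = 0 := Finsupp.notMem_support_iff.1 fun hmem => (hu t hmem).not_gt ht
  simp [hut]

lemma IsInitialSegment.sub_single_maxIdx (hg : IsInitialSegment g B) :
    IsInitialSegment (g - Finsupp.single (maxIdx g) 1) B := by
  refine ⟨tsub_le_self.trans hg.1, fun t ht => ?_⟩
  have ht' : t < maxIdx g := ht.trans_le (maxIdx_mono tsub_le_self)
  simp [ht'.ne', hg.2 t ht']

lemma IsInitialSegment.le_of_maxIdx_le (hg : IsInitialSegment g B) (hh : IsInitialSegment h B)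
    (hm : maxIdx g ≤ maxIdx h) (hgh : g (maxIdx g) ≤ h (maxIdx g)) : g ≤ h := by
  intro t
  rcases lt_trichotomy t (maxIdx g) with ht | rfl | ht
  · rw [hg.2 t ht, hh.2 t (ht.trans_le hm)]
  · exact hgh
  · simp [apply_eq_zero_of_maxIdx_lt ht]

lemma IsInitialSegment.le_or_le (hg : IsInitialSegment g B) (hh : IsInitialSegment h B) :
    g ≤ h ∨ h ≤ g := by
  wlog hm : maxIdx g ≤ maxIdx h generalizing g h
  · exact (this hh hg (le_of_not_ge hm)).symm
  by_cases hgh : g (maxIdx g) ≤ h (maxIdx g)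
  · exact .inl (hg.le_of_maxIdx_le hh hm hgh)
  · have heq : maxIdx g = maxIdx h :=
      hm.antisymm (not_lt.1 fun hlt => hgh ((hg.1 _).trans (hh.2 _ hlt).ge))
    exact .inr (hh.le_of_maxIdx_le hg heq.ge (by rw [← heq]; omega))

end InitialSegment

lemma Finsupp.exists_le_tsub_single_of_lt {ι : Type*} [DecidableEq ι] {C g : ι →₀ ℕ}
    (h : C < g) :
    ∃ j, g j ≠ 0 ∧ C ≤ g - Finsupp.single j 1 := by
  obtain ⟨j, hj⟩ : ∃ j, C j < g j := by
    by_contra! hge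
    exact h.not_ge fun t => hge t
  refine ⟨j, by omega, fun t => ?_⟩
  rcases eq_or_ne t j with rfl | htj
  · rw [Finsupp.tsub_apply, Finsupp.single_eq_same]
    omega
  · simpa [Finsupp.single_apply, htj.symm] using h.le t

section Stable

variable {K : Type*} [Field K] {n : ℕ} {I : Ideal (PR K n)} {g B : Fin (n+1) →₀ ℕ}

lemma MinGen.eq_of_isInitialSegment {h : Fin (n+1) →₀ ℕ} (hg : MinGen I g) (hh : MinGen I h)
    (hgB : IsInitialSegment g B) (hhB : IsInitialSegment h B) : g = h :=
  (hgB.le_or_le hhB).elim (hg.eq_of_le hh) fun hle => (hh.eq_of_le hg hle).symm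

/-- `x^g / x_{max}` is `(x_j / x_{max}) · (x^g / x_j)`, and `x^g / x_j` still has maximum
`max(x^g)`. -/
lemma Stable.mon_tsub_single_maxIdx_mem (hI : Stable I) {j : Fin (n+1)} (hj : g j ≠ 0)
    (hmem : mon (g - Finsupp.single j 1) ∈ I) : mon (g - Finsupp.single (maxIdx g) 1) ∈ I := by
  obtain rfl | hjm := eq_or_ne j (maxIdx g)
  · exact hmem
  set g' := g - Finsupp.single j 1
  have hg'm : g' (maxIdx g) = g (maxIdx g) := by simp [g', hjm]
  have hg'm0 : g' (maxIdx g) ≠ 0 := hg'm ▸ apply_maxIdx_ne_zero fun h0 => hj (by simp [h0])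
  have hmax : maxIdx g' = maxIdx g := (maxIdx_mono tsub_le_self).antisymm (le_maxIdx hg'm0)
  have hshift : shiftM g' j (maxIdx g) = g - Finsupp.single (maxIdx g) 1 := by
    rw [shiftM, tsub_add_cancel_of_le (Finsupp.single_le_iff.2 (Nat.one_le_iff_ne_zero.2 hj))]
  have := hI g' (fun h0 => hg'm0 (by simp [h0])) hmem j (hmax ▸ (le_maxIdx hj).lt_of_ne hjm)
  rwa [hmax, hshift] at this

theorem Stable.exists_minGen_isInitialSegment (hI : Stable I) (hB : mon B ∈ I) :
    ∃ g, MinGen I g ∧ IsInitialSegment g B := by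
  suffices ∀ g, IsInitialSegment g B → mon g ∈ I →
      ∃ g', MinGen I g' ∧ IsInitialSegment g' B from
    this B (isInitialSegment_refl B) hB
  intro g
  induction g using WellFoundedLT.induction with
  | _ g ih =>
  intro hgB hgI
  by_cases hmin : MinGen I g
  · exact ⟨g, hmin, hgB⟩
  obtain ⟨C, hCg, hCne, hCI⟩ : ∃ C ≤ g, C ≠ g ∧ mon C ∈ I := by
    simpa [MinGen, hgI] using hmin
  obtain ⟨j, hj, hCle⟩ := Finsupp.exists_le_tsub_single_of_lt (lt_of_le_of_ne hCg hCne)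
  have hgm : g (maxIdx g) ≠ 0 := apply_maxIdx_ne_zero fun h0 => hj (by simp [h0])
  have hlt : g - Finsupp.single (maxIdx g) 1 < g := by
    refine lt_of_le_of_ne tsub_le_self fun heq => hgm ?_
    have := DFunLike.congr_fun heq (maxIdx g)
    rw [Finsupp.tsub_apply, Finsupp.single_eq_same] at this
    omega
  exact ih _ hlt hgB.sub_single_maxIdx (hI.mon_tsub_single_maxIdx_mem hj (mon_mem_of_le hCI hCle))

end Stable

section Counting

variable {n : ℕ}

lemma mdeg_add (a b : Fin (n+1) →₀ ℕ) : mdeg (a + b) = mdeg a + mdeg b := by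
  simp [mdeg, sum_add_distrib]

lemma mem_finsuppAntidiag_iff_mdeg {s : Finset (Fin (n+1))} {m : ℕ} {u : Fin (n+1) →₀ ℕ} :
    u ∈ s.finsuppAntidiag m ↔ mdeg u = m ∧ u.support ⊆ s := by
  rw [mem_finsuppAntidiag, mdeg]
  refine and_congr_left fun hu => ?_
  rw [sum_subset (subset_univ s) fun t _ ht => Finsupp.notMem_support_iff.1 fun h => ht (hu h)]

lemma card_finsuppAntidiag_univ (j : ℕ) :
    #(univ.finsuppAntidiag j : Finset (Fin (n+1) →₀ ℕ)) = (j + n).choose n := by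
  rw [card_finsuppAntidiag_nat_eq_choose, card_univ, Fintype.card_fin,
    show n + 1 + j - 1 = j + n by omega, Nat.choose_symm_add]

lemma card_finsuppAntidiag_Ici (l : Fin (n+1)) (m : ℕ) :
    #((Ici l).finsuppAntidiag m) = (n - l + m).choose (n - l) := by
  have := l.is_lt
  rw [card_finsuppAntidiag_nat_eq_choose, Fin.card_Ici, show n + 1 - l + m - 1 = n - l + m by omega,
    Nat.choose_symm_add]

variable {K : Type*} [Field K] {I : Ideal (PR K n)} [DecidablePred (· ∈ I)]

theorem Stable.card_filter_mon_mem (hI : Stable I) {r : ℕ} {A : Fin r → Fin (n+1) →₀ ℕ}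
    (hinj : Function.Injective A) (hspan : I = Ideal.span (Set.range fun i => (mon (A i) : PR K n)))
    (hgen : ∀ i, MinGen I (A i)) {j : ℕ} (hj : ∀ i, mdeg (A i) ≤ j) :
    #{B ∈ univ.finsuppAntidiag j | (mon B : PR K n) ∈ I}
      = ∑ i, #((Ici (maxIdx (A i))).finsuppAntidiag (j - mdeg (A i))) := by
  rw [← card_sigma, eq_comm]
  refine card_nbij (fun x => A x.1 + x.2) ?_ ?_ ?_
  · rintro ⟨i, u⟩ hu
    simp only [mem_coe, mem_sigma, mem_univ, true_and,
      mem_finsuppAntidiag_iff_mdeg] at hu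
    simp only [mem_coe, mem_filter, mem_finsuppAntidiag_iff_mdeg, mdeg_add, hu.1,
      subset_univ, and_true]
    refine ⟨by have := hj i; omega, mon_mem_of_le (hgen i).1 le_self_add⟩
  · rintro ⟨i, u⟩ hu ⟨i', u'⟩ hu' heq
    simp only [mem_coe, mem_sigma, mem_univ, true_and,
      mem_finsuppAntidiag_iff_mdeg] at hu hu' heq
    have hseg : IsInitialSegment (A i) (A i + u) :=
      isInitialSegment_add fun t ht => mem_Ici.1 (hu.2 ht)
    have hseg' : IsInitialSegment (A i') (A i + u) :=
      heq ▸ isInitialSegment_add fun t ht => mem_Ici.1 (hu'.2 ht)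
    obtain rfl := hinj ((hgen i).eq_of_isInitialSegment (hgen i') hseg hseg')
    obtain rfl := add_left_cancel heq
    rfl
  · intro B hB
    simp only [mem_coe, mem_filter, mem_finsuppAntidiag_iff_mdeg] at hB
    obtain ⟨⟨hBdeg, -⟩, hBI⟩ := hB
    obtain ⟨g, hg, hgB⟩ := hI.exists_minGen_isInitialSegment hBI
    obtain ⟨i, hig⟩ := (mon_mem_span_range_iff A g).1 (hspan ▸ hg.1)
    obtain rfl := (hgen i).eq_of_le hg hig
    have hsum : A i + (B - A i) = B := add_tsub_cancel_of_le hgB.1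
    refine ⟨⟨i, B - A i⟩, ?_, hsum⟩
    simp only [mem_coe, mem_sigma, mem_univ, true_and,
      mem_finsuppAntidiag_iff_mdeg]
    refine ⟨by have := mdeg_add (A i) (B - A i); rw [hsum] at this; omega, fun t ht => ?_⟩
    refine mem_Ici.2 (not_lt.1 fun hlt => Finsupp.mem_support_iff.1 ht ?_)
    simp [hgB.2 t hlt]

end Counting

section HilbertFunction

variable {K : Type*} [Field K]

lemma homogeneousSubmodule_eq_span_monomial (σ : Type*) (j : ℕ) :
    homogeneousSubmodule σ K j
      = Submodule.span K ((fun d => monomial d (1 : K)) '' {d : σ →₀ ℕ | d.degree = j}) := by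
  rw [homogeneousSubmodule_eq_finsupp_supported, AddMonoidAlgebra.supported_eq_span_single]
  rfl

variable {n : ℕ} {I : Ideal (PR K n)}

lemma coeff_mon (B C : Fin (n+1) →₀ ℕ) : coeff B (mon C : PR K n) = if C = B then 1 else 0 :=
  coeff_monomial B C 1

lemma IsMonomialIdeal.linearIndependent_mk_mon (hI : IsMonomialIdeal I) :
    LinearIndependent K fun B : {B : Fin (n+1) →₀ ℕ // (mon B : PR K n) ∉ I} =>
      Ideal.Quotient.mkₐ K I (mon B.1) := by
  classical
  rw [linearIndependent_iff']
  intro s c hc B hB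
  set f : PR K n := ∑ C ∈ s, c C • mon C.1
  have hfI : f ∈ I := by
    rw [← Ideal.Quotient.eq_zero_iff_mem, ← Ideal.Quotient.mkₐ_eq_mk K]
    simpa [f, map_sum] using hc
  have hcoeff : coeff B.1 f = c B := by
    simp only [f, coeff_sum, coeff_smul, coeff_mon, smul_eq_mul, mul_ite, mul_one, mul_zero,
      Subtype.val_inj]
    rw [sum_ite_eq' s B c, if_pos hB]
  by_contra hcB
  exact B.2 ((hI.mem_iff f).1 hfI B.1 (mem_support_iff.2 (hcoeff ▸ hcB)))

theorem IsMonomialIdeal.hilbF_eq_card [DecidablePred (· ∈ I)] (hI : IsMonomialIdeal I)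
    (j : ℕ) :
    hilbF I j = #{B ∈ univ.finsuppAntidiag j | (mon B : PR K n) ∉ I} := by
  set S : Finset (Fin (n+1) →₀ ℕ) := {B ∈ univ.finsuppAntidiag j | (mon B : PR K n) ∉ I}
  have hmem : ∀ B, B ∈ S ↔ B.degree = j ∧ (mon B : PR K n) ∉ I := fun B => by
    simp [S, Finsupp.degree_eq_sum]
  have hspan : (homogeneousSubmodule _ K j).map (Ideal.Quotient.mkₐ K I).toLinearMap
      = Submodule.span K (Set.range fun B : S => Ideal.Quotient.mkₐ K I (mon B.1)) := by
    rw [homogeneousSubmodule_eq_span_monomial, Submodule.map_span]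
    refine le_antisymm (Submodule.span_le.2 ?_) (Submodule.span_le.2 ?_)
    · rintro _ ⟨_, ⟨B, hB, rfl⟩, rfl⟩
      by_cases hBI : (mon B : PR K n) ∈ I
      · change Ideal.Quotient.mk I (mon B) ∈ _
        rw [Ideal.Quotient.eq_zero_iff_mem.2 hBI]
        exact zero_mem _
      · exact Submodule.subset_span ⟨⟨B, (hmem B).2 ⟨hB, hBI⟩⟩, rfl⟩
    · rintro _ ⟨B, rfl⟩
      exact Submodule.subset_span ⟨_, ⟨B.1, ((hmem B.1).1 B.2).1, rfl⟩, rfl⟩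
  have hindep : LinearIndependent K fun B : S => Ideal.Quotient.mkₐ K I (mon B.1) :=
    hI.linearIndependent_mk_mon.comp
    (fun B : S => (⟨B.1, ((hmem B.1).1 B.2).2⟩ : {B // (mon B : PR K n) ∉ I}))
    fun B C h => Subtype.ext (congrArg Subtype.val h : _)
  rw [hilbF, hspan, finrank_span_eq_card hindep, Fintype.card_coe]

theorem Stable.hilbF_add_sum_choose (hI : Stable I) {r : ℕ} {A : Fin r → Fin (n+1) →₀ ℕ}
    (hinj : Function.Injective A) (hspan : I = Ideal.span (Set.range fun i => (mon (A i) : PR K n)))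
    (hgen : ∀ i, MinGen I (A i)) {j : ℕ} (hj : ∀ i, mdeg (A i) + maxIdx (A i) ≤ j) :
    hilbF I j + ∑ i, (j + n - mdeg (A i) - maxIdx (A i)).choose (n - maxIdx (A i))
      = (j + n).choose n := by
  classical
  have htail (i : Fin r) : #((Ici (maxIdx (A i))).finsuppAntidiag (j - mdeg (A i)))
      = (j + n - mdeg (A i) - maxIdx (A i)).choose (n - maxIdx (A i)) := by
    have := hj i
    have := (maxIdx (A i)).is_le
    rw [card_finsuppAntidiag_Ici]
    congr 1
    omega
  rw [(hspan ▸ isMonomialIdeal_span_range A : IsMonomialIdeal I).hilbF_eq_card,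
    ← card_finsuppAntidiag_univ,
    ← card_filter_add_card_filter_not (s := univ.finsuppAntidiag j)
      fun B => (mon B : PR K n) ∈ I,
    hI.card_filter_mon_mem hinj hspan hgen fun i => (Nat.le_add_right _ _).trans (hj i), add_comm]
  simp only [htail]

end HilbertFunction

lemma choosePoly_eval_of_eval_eq {q : Polynomial ℚ} {x : ℚ} {a : ℕ} (hq : q.eval x = a)
    (k : ℕ) :
    (choosePoly q k).eval x = a.choose k := by
  simp only [choosePoly, Polynomial.eval_smul, Polynomial.eval_prod, Polynomial.eval_sub,
    Polynomial.eval_C, hq, smul_eq_mul]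
  rw [← descPochhammer_eval_eq_prod_range, descPochhammer_eval_eq_descFactorial,
    Nat.descFactorial_eq_factorial_mul_choose, Nat.cast_mul,
    inv_mul_cancel_left₀ (by exact_mod_cast k.factorial_ne_zero)]

lemma choosePoly_eval_X_add_C_sub_C_sub_C {d l j : ℕ} (h : d + l ≤ j) (n k : ℕ) :
    (choosePoly (Polynomial.X + Polynomial.C (n : ℚ) - Polynomial.C (d : ℚ)
      - Polynomial.C (l : ℚ)) k).eval (j : ℚ) = (j + n - d - l).choose k := by
  refine choosePoly_eval_of_eval_eq ?_ k
  simp only [Polynomial.eval_sub, Polynomial.eval_add, Polynomial.eval_X, Polynomial.eval_C]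
  rw [Nat.cast_sub (by omega), Nat.cast_sub (by omega)]
  push_cast
  ring

theorem hilbPoly_of_saturated_stable_general
    {K : Type*} [Field K] {n : ℕ} (I : Ideal (PR K n))
    (hstab : Stable I)
    (r : ℕ) (A : Fin r → (Fin (n+1) →₀ ℕ)) (hinj : Function.Injective A)
    (hspan : I = Ideal.span (Set.range fun i => (mon (A i) : PR K n)))
    (hgen : ∀ i, MinGen I (A i)) :
    IsHilbPoly I
      (choosePoly (Polynomial.X + Polynomial.C (n : ℚ)) n
        - ∑ i : Fin r,
            choosePoly
              (Polynomial.X + Polynomial.C (n : ℚ) - Polynomial.C (mdeg (A i) : ℚ)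
                - Polynomial.C ((maxIdx (A i) : ℕ) : ℚ))
              (n - (maxIdx (A i) : ℕ))) := by
  refine ⟨univ.sup fun i => mdeg (A i) + maxIdx (A i), fun j hj => ?_⟩
  have hdeg (i : Fin r) : mdeg (A i) + maxIdx (A i) ≤ j :=
    (le_sup (f := fun i => mdeg (A i) + maxIdx (A i)) (mem_univ i)).trans hj
  rw [Polynomial.eval_sub, Polynomial.eval_finsetSum,
    choosePoly_eval_of_eval_eq (a := j + n) (by simp),
    sum_congr rfl fun i _ => choosePoly_eval_X_add_C_sub_C_sub_C (hdeg i) _ _,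
    ← hstab.hilbF_add_sum_choose hinj hspan hgen hdeg]
  push_cast
  ring

/-- the Hilbert polynomial of a saturated stable monomial ideal in terms
of the degrees `d_i` and max indices `l_i` of its minimal generators:
`p_{R/I}(z) = C(z+n,n) − Σ_i C(z+n−d_i−l_i, n−l_i)`. -/
theorem hilbPoly_of_saturated_stable
    {K : Type*} [Field K] {n : ℕ} (I : Ideal (PR K n))
    (hmono : IsMonomialIdeal I) (hstab : Stable I) (hsat : Saturated I)
    (r : ℕ) (A : Fin r → (Fin (n+1) →₀ ℕ)) (hinj : Function.Injective A)
    (hspan : I = Ideal.span (Set.range fun i => (mon (A i) : PR K n)))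
    (hgen : ∀ i, MinGen I (A i)) :
    IsHilbPoly I
      (choosePoly (Polynomial.X + Polynomial.C (n : ℚ)) n
        - ∑ i : Fin r,
            choosePoly
              (Polynomial.X + Polynomial.C (n : ℚ) - Polynomial.C (mdeg (A i) : ℚ)
                - Polynomial.C ((maxIdx (A i) : ℕ) : ℚ))
              (n - (maxIdx (A i) : ℕ))) :=
  hilbPoly_of_saturated_stable_general I hstab r A hinj hspan hgen
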